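/- In the six-symbol bosonic Weyl system realizing the fields β(z), β*(z), ε_1(z), ε_1*(z), ε_2(z), ε_2*(z), with x_0⁺(m) := ½(:β*e*:)(m), x_0⁻(m) := ½(:βe:)(m) and α_0(m) := −½[(:ee*:)(m) + (:eβ*:)(m) + (:βe*:)(m) + (:ββ*:)(m)], the affine (0-node) commutation relation holds in mode form: for all m, n ∈ ℤ, x_0⁺(m)x_0⁻(n) − x_0⁻(n)x_0⁺(m) = −½·α_0(m+n) + ((m−1)/2)·δ_{m+n,0}·id. (This is the precise mode form, with the normal-ordering convention fixed in the context, of the computation [x_0^+(z), x_0^-(w)] = ¼{(:ε_1ε_1^*: + :ε_1β^*: + :βε_1^*: + :ββ^*:)(w)δ(z−w) + 2∂_wδ(z−w)} = −(2/(α_0,α_0)){α_0(w)δ(z−w) + ∂_wδ(z−w)·(−1)} from the proof of Theorem 3.5, where (α_0,α_0) = 4 and the central element K acts by −1.) -/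

import Mathlib

noncomputable section

/-- A *bosonic Weyl system* over a set `S` of symbols with pairing `pair : S → S → ℂ`
on a complex vector space `W`: a family of operators `op u k` (`u ∈ S`, `k ∈ ℤ`)
such that `[op u k, op v l] = ⟨u,v⟩ δ_{k+l,0} id`. -/
def IsBosonicWeylSystem {S W : Type*} [AddCommGroup W] [Module ℂ W]
    (pair : S → S → ℂ) (op : S → ℤ → Module.End ℂ W) : Prop :=
  ∀ u v : S, ∀ k l : ℤ,
    op u k * op v l - op v l * op u k =
      if k + l = 0 then pair u v • (1 : Module.End ℂ W) else 0

/-- A family of operators is *locally annihilating* if for every vector `w` and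
every symbol `u`, `op u k w = 0` for all sufficiently large `k`. -/
def LocallyAnnihilating {S W : Type*} [AddCommGroup W] [Module ℂ W]
    (op : S → ℤ → Module.End ℂ W) : Prop :=
  ∀ (w : W) (u : S), ∃ K : ℤ, ∀ k : ℤ, K ≤ k → op u k w = 0

/-- The normally ordered quadratic mode
`(:uv:)(m) = Σ_{j<0} u(j)v(m-j) + Σ_{j≥0} v(m-j)u(j)` applied to a vector `w`;
on a locally annihilating system all but finitely many summands vanish, so the
`finsum` computes the intended (finite) sum. -/
def noMode {S W : Type*} [AddCommGroup W] [Module ℂ W]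
    (op : S → ℤ → Module.End ℂ W) (u v : S) (m : ℤ) (w : W) : W :=
  ∑ᶠ j : ℤ, if j < 0 then op u j (op v (m - j) w) else op v (m - j) (op u j w)

end

/-- The six symbols `β, β*, ε₁, ε₁*, ε₂, ε₂*`: the symbol `(i, false)` is the plain
symbol (`0 = β`, `1 = ε₁ = e`, `2 = ε₂ = f`) and `(i, true)` the starred one. -/
abbrev WSym6 : Type := Fin 3 × Bool

/-- The Gram values `g(β,β) = g(β,e) = g(e,β) = g(e,e) = g(f,f) = 1`, `g(β,f) = g(e,f) = 0`. -/
noncomputable def gram6 : Fin 3 → Fin 3 → ℂ := !![1, 1, 0; 1, 1, 0; 0, 0, 1]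

/-- The pairing `⟨u, v*⟩ = -g(u,v)`, `⟨u*, v⟩ = g(u,v)`, `⟨u,v⟩ = ⟨u*,v*⟩ = 0`. -/
noncomputable def pair6 : WSym6 → WSym6 → ℂ
  | (i, false), (j, true) => -gram6 i j
  | (i, true), (j, false) => gram6 i j
  | _, _ => 0

section
variable {W : Type*} [AddCommGroup W] [Module ℂ W] (op : WSym6 → ℤ → Module.End ℂ W)

/-- `x₀⁺(m) = ½ (:β*e*:)(m)` (applied to a vector). -/
noncomputable def xZeroPlus (m : ℤ) (w : W) : W :=
  (1 / 2 : ℂ) • noMode op (0, true) (1, true) m w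

/-- `x₀⁻(m) = ½ (:βe:)(m)` (applied to a vector). -/
noncomputable def xZeroMinus (m : ℤ) (w : W) : W :=
  (1 / 2 : ℂ) • noMode op (0, false) (1, false) m w

/-- `x₁⁺(m) = √-1 (:ef*:)(m)` (applied to a vector). -/
noncomputable def xOnePlus (m : ℤ) (w : W) : W :=
  Complex.I • noMode op (1, false) (2, true) m w

/-- `α₀(m) = -½[(:ee*:)(m) + (:eβ*:)(m) + (:βe*:)(m) + (:ββ*:)(m)]` (applied to a vector). -/
noncomputable def alZero (m : ℤ) (w : W) : W :=
  (-(1 / 2) : ℂ) • (noMode op (1, false) (1, true) m w + noMode op (1, false) (0, true) m w +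
    noMode op (0, false) (1, true) m w + noMode op (0, false) (0, true) m w)

end

/-- The commutator `[A, B] = AB - BA` of two (pointwise-defined) operators. -/
def brkt {W : Type*} [AddCommGroup W] (A B : W → W) : W → W := fun w => A (B w) - B (A w)

/-!
Modes commute up to scalars, so `[:uv:(m), x(k)] = ⟨v,x⟩ u(m+k) + ⟨u,x⟩ v(m+k)`. When `x` and `y`
commute, `:xy:(n) = Σₖ x(k) y(n-k)`; applying the Leibniz rule to each summand and normally
ordering the four resulting products again gives four normally ordered modes at `m + n`, plus a
contraction for each `k` in `(n, 0)` (sign `+`) or in `[0, n]` (sign `-`). These contractions add up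
to `(m - 1)(⟨v,x⟩⟨u,y⟩ + ⟨u,x⟩⟨v,y⟩) δ_{m+n,0}`. For `(u, v, x, y) = (β*, e*, β, e)` all four
pairings are `1`, and the four modes are exactly those in `-2 α₀(m+n)`.
-/

open Function

section FiniteSupport

variable {α M : Type*} {p : α → Prop} [DecidablePred p] {a : α}

theorem hasFiniteSupport_ite_of_imp_eq [Zero M] (hp : ∀ j, p j → j = a) (f : α → M) :
    HasFiniteSupport fun j => if p j then f j else 0 :=
  (Set.finite_singleton a).subset fun j hj => hp j (by_contra fun h => hj (if_neg h))

theorem finsum_ite_of_imp_eq [AddCommMonoid M] (hp : ∀ j, p j → j = a) (f : α → M) :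
    ∑ᶠ j, (if p j then f j else 0) = if p a then f a else 0 :=
  finsum_eq_single _ a fun j hj => if_neg fun h => hj (hp j h)

theorem hasFiniteSupport_ite_mem [DecidableEq α] [Zero M] (s : Finset α) (f : α → M) :
    HasFiniteSupport fun j => if j ∈ s then f j else 0 :=
  s.finite_toSet.subset fun _ hj => Finset.mem_coe.2 (by_contra fun h => hj (if_neg h))

theorem finsum_ite_mem [DecidableEq α] [AddCommMonoid M] (s : Finset α) (f : α → M) :
    ∑ᶠ j, (if j ∈ s then f j else 0) = ∑ j ∈ s, f j := by
  rw [finsum_eq_sum_of_support_subset _ fun j hj =>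
    Finset.mem_coe.2 (by_contra fun h => hj (if_neg h))]
  exact Finset.sum_congr rfl fun j hj => if_pos hj

end FiniteSupport

theorem finsum_ite_mem_Ioo_sub_ite_mem_Icc (n : ℤ) :
    ∑ᶠ k, ((if k ∈ Finset.Ioo n 0 then 1 else 0) - (if k ∈ Finset.Icc 0 n then 1 else 0) : ℂ) =
      -(n + 1) := by
  rw [finsum_sub_distrib (hasFiniteSupport_ite_mem _ _) (hasFiniteSupport_ite_mem _ _),
    finsum_ite_mem, finsum_ite_mem, Finset.sum_const, Finset.sum_const, nsmul_one, nsmul_one]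
  have hcard : ((Finset.Ioo n 0).card : ℤ) - (Finset.Icc 0 n).card = -(n + 1) := by
    simp only [Int.card_Ioo, Int.card_Icc]; omega
  exact_mod_cast hcard

section NormalOrdering

variable {S W : Type*} [AddCommGroup W] [Module ℂ W] (op : S → ℤ → Module.End ℂ W)

def noModeTerm (u v : S) (m : ℤ) (w : W) (j : ℤ) : W :=
  if j < 0 then op u j (op v (m - j) w) else op v (m - j) (op u j w)

theorem noMode_eq_finsum (u v : S) (m : ℤ) (w : W) :
    noMode op u v m w = ∑ᶠ j, noModeTerm op u v m w j := rfl

theorem noMode_smul (u v : S) (m : ℤ) (c : ℂ) (w : W) :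
    noMode op u v m (c • w) = c • noMode op u v m w := by
  simp only [noMode_eq_finsum, smul_finsum]
  exact finsum_congr fun j => by unfold noModeTerm; split_ifs <;> simp

variable {op}

theorem LocallyAnnihilating.hasFiniteSupport_noModeTerm (hA : LocallyAnnihilating op)
    (u v : S) (m : ℤ) (w : W) : (noModeTerm op u v m w).HasFiniteSupport := by
  obtain ⟨K, hK⟩ := hA w u
  obtain ⟨L, hL⟩ := hA w v
  refine (Set.finite_Ioo (min (m - L) (-1)) (max K 1)).subset fun j hj => ?_
  simp only [mem_support, noModeTerm] at hj
  split_ifs at hj with hneg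
  · have : m - j < L := not_le.1 fun h => hj (by rw [hL _ h, map_zero])
    exact ⟨min_lt_of_left_lt (by omega), lt_max_of_lt_right (by omega)⟩
  · have : j < K := not_le.1 fun h => hj (by rw [hK _ h, map_zero])
    exact ⟨min_lt_of_right_lt (by omega), lt_max_of_lt_left this⟩

noncomputable def noModeₗ (hA : LocallyAnnihilating op) (u v : S) (m : ℤ) : W →ₗ[ℂ] W where
  toFun := noMode op u v m
  map_add' w w' := by
    simp only [noMode_eq_finsum]
    rw [← finsum_add_distrib (hA.hasFiniteSupport_noModeTerm u v m w)
      (hA.hasFiniteSupport_noModeTerm u v m w')]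
    exact finsum_congr fun j => by unfold noModeTerm; split_ifs <;> simp
  map_smul' := noMode_smul op u v m

@[simp]
theorem noModeₗ_apply (hA : LocallyAnnihilating op) (u v : S) (m : ℤ) (w : W) :
    noModeₗ hA u v m w = noMode op u v m w := rfl

end NormalOrdering

namespace IsBosonicWeylSystem

variable {S W : Type*} [AddCommGroup W] [Module ℂ W] {pair : S → S → ℂ}
  {op : S → ℤ → Module.End ℂ W}

theorem op_op_apply (hW : IsBosonicWeylSystem pair op) (u v : S) (k l : ℤ) (w : W) :
    op u k (op v l w) = op v l (op u k w) + if k + l = 0 then pair u v • w else 0 := by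
  have h := LinearMap.congr_fun (hW u v k l) w
  rw [LinearMap.sub_apply, Module.End.mul_apply, Module.End.mul_apply] at h
  rw [← sub_eq_iff_eq_add', h]
  split_ifs <;> simp

theorem pair_swap_smul (hW : IsBosonicWeylSystem pair op) (u v : S) (w : W) :
    pair v u • w = -(pair u v • w) := by
  have h := hW.op_op_apply u v 0 0 w
  rw [hW.op_op_apply v u 0 0 w] at h
  simpa [add_assoc, add_eq_zero_iff_eq_neg] using h

theorem op_op_op_commutator (hW : IsBosonicWeylSystem pair op) (p q x : S) (a b k : ℤ) (w : W) :
    op p a (op q b (op x k w)) - op x k (op p a (op q b w)) =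
      (if b + k = 0 then pair q x • op p a w else 0) +
        if a + k = 0 then pair p x • op q b w else 0 := by
  rw [hW.op_op_apply q x b k w, map_add, hW.op_op_apply p x a k]
  split_ifs <;> simp only [map_smul, map_zero] <;> abel

theorem noModeTerm_eq_of_pair_eq_zero (hW : IsBosonicWeylSystem pair op) {u v : S}
    (hvu : pair v u = 0) (m : ℤ) (w : W) (j : ℤ) :
    noModeTerm op u v m w j = op u j (op v (m - j) w) := by
  unfold noModeTerm
  split_ifs
  · rfl
  · rw [hW.op_op_apply v u, hvu]; simp

theorem noModeTerm_op_sub (hW : IsBosonicWeylSystem pair op) (u v x : S) (m k : ℤ) (w : W)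
    (j : ℤ) :
    noModeTerm op u v m (op x k w) j - op x k (noModeTerm op u v m w j) =
      (if m - j + k = 0 then pair v x • op u j w else 0) +
        if j + k = 0 then pair u x • op v (m - j) w else 0 := by
  unfold noModeTerm
  by_cases hj : j < 0
  · simp only [if_pos hj]
    exact hW.op_op_op_commutator u v x j (m - j) k w
  · simp only [if_neg hj]
    rw [hW.op_op_op_commutator v u x (m - j) j k w, add_comm]

theorem noMode_op_commutator (hW : IsBosonicWeylSystem pair op) (hA : LocallyAnnihilating op)
    (u v x : S) (m k : ℤ) (w : W) :
    noMode op u v m (op x k w) - op x k (noMode op u v m w) =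
      pair v x • op u (m + k) w + pair u x • op v (m + k) w := by
  have hfin := hA.hasFiniteSupport_noModeTerm u v m
  have h₁ : ∀ j, m - j + k = 0 → j = m + k := by omega
  have h₂ : ∀ j, j + k = 0 → j = -k := by omega
  rw [noMode_eq_finsum, noMode_eq_finsum, map_finsum _ (hfin w),
    ← finsum_sub_distrib (hfin _) ((hfin w).fun_comp (map_zero _)),
    finsum_congr (hW.noModeTerm_op_sub u v x m k w),
    finsum_add_distrib (hasFiniteSupport_ite_of_imp_eq h₁ _) (hasFiniteSupport_ite_of_imp_eq h₂ _),
    finsum_ite_of_imp_eq h₁, finsum_ite_of_imp_eq h₂, if_pos (by ring), if_pos (by ring),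
    sub_neg_eq_add]

theorem op_op_eq_noModeTerm (hW : IsBosonicWeylSystem pair op) (p q : S) (M a : ℤ) (w : W) :
    op p a (op q (M - a) w) =
      noModeTerm op p q M w a + if 0 ≤ a ∧ M = 0 then pair p q • w else 0 := by
  unfold noModeTerm
  by_cases ha : a < 0
  · simp [ha]
  · rw [if_neg ha, hW.op_op_apply p q a (M - a)]
    simp [not_lt.1 ha]

theorem op_op_eq_noModeTerm_swap (hW : IsBosonicWeylSystem pair op) (p q : S) (M b : ℤ)
    (w : W) :
    op p (M - b) (op q b w) =
      noModeTerm op q p M w b + if b < 0 ∧ M = 0 then pair p q • w else 0 := by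
  unfold noModeTerm
  by_cases hb : b < 0
  · rw [if_pos hb, hW.op_op_apply p q (M - b) b]
    simp [hb]
  · simp [hb]

theorem noMode_op_op_commutator (hW : IsBosonicWeylSystem pair op) (hA : LocallyAnnihilating op)
    (u v x y : S) (m n k : ℤ) (w : W) :
    noMode op u v m (op x k (op y (n - k) w)) - op x k (op y (n - k) (noMode op u v m w)) =
      pair v x • noModeTerm op y u (m + n) w (n - k) +
        pair u x • noModeTerm op y v (m + n) w (n - k) +
        pair v y • noModeTerm op x u (m + n) w k + pair u y • noModeTerm op x v (m + n) w k +
        ((if k ∈ Finset.Ioo n 0 then 1 else 0) - (if k ∈ Finset.Icc 0 n then 1 else 0) : ℂ) •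
          if m + n = 0 then (pair v x * pair u y + pair u x * pair v y) • w else 0 := by
  have hleibniz : noMode op u v m (op x k (op y (n - k) w)) -
      op x k (op y (n - k) (noMode op u v m w)) =
      (noMode op u v m (op x k (op y (n - k) w)) - op x k (noMode op u v m (op y (n - k) w))) +
        op x k (noMode op u v m (op y (n - k) w) - op y (n - k) (noMode op u v m w)) := by
    rw [map_sub]; abel
  rw [hleibniz, hW.noMode_op_commutator hA, hW.noMode_op_commutator hA, map_add, map_smul, map_smul,
    show m + k = m + n - (n - k) by ring, show m + (n - k) = m + n - k by ring,
    hW.op_op_eq_noModeTerm_swap, hW.op_op_eq_noModeTerm_swap, hW.op_op_eq_noModeTerm,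
    hW.op_op_eq_noModeTerm, hW.pair_swap_smul u x, hW.pair_swap_smul v x]
  simp only [Finset.mem_Ioo, Finset.mem_Icc]
  split_ifs <;> first | omega | module

theorem noMode_noMode_commutator (hW : IsBosonicWeylSystem pair op) (hA : LocallyAnnihilating op)
    {u v x y : S} (hyx : pair y x = 0) (m n : ℤ) (w : W) :
    noMode op u v m (noMode op x y n w) - noMode op x y n (noMode op u v m w) =
      pair v x • noMode op y u (m + n) w + pair u x • noMode op y v (m + n) w +
        pair v y • noMode op x u (m + n) w + pair u y • noMode op x v (m + n) w +
        if m + n = 0 then (((m : ℂ) - 1) * (pair v x * pair u y + pair u x * pair v y)) • w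
        else 0 := by
  have hfin := hA.hasFiniteSupport_noModeTerm
  have hshift : ∀ p q, HasFiniteSupport fun k => noModeTerm op p q (m + n) w (n - k) :=
    fun p q => (hfin p q _ w).fun_comp_of_injective sub_right_injective
  have hcentral : HasFiniteSupport fun k =>
      ((if k ∈ Finset.Ioo n 0 then 1 else 0) - (if k ∈ Finset.Icc 0 n then 1 else 0) : ℂ) :=
    (hasFiniteSupport_ite_mem _ _).fun_sub (hasFiniteSupport_ite_mem _ _)
  have hreindex : ∀ p q, ∑ᶠ k, noModeTerm op p q (m + n) w (n - k) = noMode op p q (m + n) w :=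
    fun _ _ => finsum_comp_equiv (Equiv.subLeft n)
  rw [noMode_eq_finsum op x y n, noMode_eq_finsum op x y n, ← noModeₗ_apply hA,
    map_finsum _ (hfin x y n w), ← finsum_sub_distrib ((hfin x y n w).fun_comp (map_zero _))
    (hfin x y n _)]
  simp only [noModeₗ_apply, hW.noModeTerm_eq_of_pair_eq_zero hyx]
  rw [finsum_congr (hW.noMode_op_op_commutator hA u v x y m n · w),
    finsum_add_distrib (by fun_prop) (by fun_prop), finsum_add_distrib (by fun_prop) (by fun_prop),
    finsum_add_distrib (by fun_prop) (by fun_prop), finsum_add_distrib (by fun_prop) (by fun_prop),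
    ← smul_finsum, ← smul_finsum, ← smul_finsum, ← smul_finsum, hreindex, hreindex,
    ← noMode_eq_finsum, ← noMode_eq_finsum, ← finsum_smul, finsum_ite_mem_Ioo_sub_ite_mem_Icc]
  split_ifs with h
  · rw [show (n : ℂ) = -m by exact_mod_cast (by omega : n = -m)]
    module
  · rw [smul_zero]

end IsBosonicWeylSystem

/-- in the six-symbol bosonic Weyl system, the affine (0-node)
commutation relation holds in mode form:
`[x₀⁺(m), x₀⁻(n)] = -½ α₀(m+n) + ((m-1)/2) δ_{m+n,0} id`. -/
theorem zero_node_commutator {W : Type*} [AddCommGroup W] [Module ℂ W]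
    (op : WSym6 → ℤ → Module.End ℂ W)
    (hW : IsBosonicWeylSystem pair6 op) (hA : LocallyAnnihilating op)
    (m n : ℤ) (w : W) :
    xZeroPlus op m (xZeroMinus op n w) - xZeroMinus op n (xZeroPlus op m w) =
      (-(1 / 2) : ℂ) • alZero op (m + n) w +
        (if m + n = 0 then (((m : ℂ) - 1) / 2) • w else 0) := by
  simp only [xZeroPlus, xZeroMinus, alZero, noMode_smul, smul_smul, ← smul_sub]
  rw [hW.noMode_noMode_commutator hA rfl]
  norm_num [pair6, gram6]
  split_ifs <;> module
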